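/- Let P' be the profile obtained from a profile P by assigning distinct new labels (not in L(P)) to all unlabeled nodes of the trees in P. Then P is ancestrally compatible if and only if P' is ancestrally compatible; moreover any semi-labeled tree that ancestrally displays P' also ancestrally displays P. -/

import Mathlib

open Function Set

/-- A finite rooted tree on a vertex type `V`, presented by its parent function:
the root is a fixed point of `parent`, and every vertex reaches the root by
iterating `parent`. -/
structure ParentTree (V : Type*) where
  root : V
  parent : V → V
  parent_root : parent root = root
  reaches_root : ∀ v : V, ∃ n : ℕ, parent^[n] v = root

namespace ParentTree

variable {V : Type*}

/-- `u ≤_T v`: `u` lies on the path from `v` to the root `r(T)`. -/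
def anc (t : ParentTree V) (u v : V) : Prop := ∃ n : ℕ, t.parent^[n] v = u

/-- The set of children of a vertex. -/
def children (t : ParentTree V) (v : V) : Set V := {u | u ≠ v ∧ t.parent u = v}

/-- Undirected adjacency in the underlying tree. -/
def adj (t : ParentTree V) (u v : V) : Prop :=
  u ≠ v ∧ (t.parent u = v ∨ t.parent v = u)

/-- The degree of a vertex in the underlying undirected tree: the number of its
neighbors (its children, plus its parent when it is not the root). -/
noncomputable def degree (t : ParentTree V) (v : V) : ℕ :=
  {u : V | t.adj u v}.ncard

end ParentTree

/-- A semi-labeled tree `(T, φ)`: a rooted tree together with a label set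
`labels ⊆ L` and a labeling map `lab` (the map `φ`), such that every node with
at most one child (equivalently, in the rooted setting, every node of small
degree that would be suppressible) carries at least one label.  This is the
rooted form of the requirement that every node of degree at most two is in the
image of `φ`. -/
structure SemiLabeledTree (L V : Type*) extends ParentTree V where
  labels : Set L
  lab : L → V
  labeled_of_few_children :
    ∀ v : V, (ParentTree.children toParentTree v).ncard ≤ 1 → ∃ ℓ ∈ labels, lab ℓ = v

namespace SemiLabeledTree

variable {L V : Type*}

/-- The set `φ⁻¹(v)` of labels of a node `v`. -/
def labelsOf (T : SemiLabeledTree L V) (v : V) : Set L := {ℓ ∈ T.labels | T.lab ℓ = v}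

/-- Every node is labeled. -/
def FullyLabeled (T : SemiLabeledTree L V) : Prop := ∀ v : V, ∃ ℓ ∈ T.labels, T.lab ℓ = v

/-- Every node has at most one label. -/
def SingularlyLabeled (T : SemiLabeledTree L V) : Prop :=
  ∀ ℓ ∈ T.labels, ∀ ℓ' ∈ T.labels, T.lab ℓ = T.lab ℓ' → ℓ = ℓ'

/-- `ℓ ≤_T ℓ'`: the node of `ℓ` is an ancestor of the node of `ℓ'`. -/
def labelLe (T : SemiLabeledTree L V) (ℓ ℓ' : L) : Prop :=
  T.toParentTree.anc (T.lab ℓ) (T.lab ℓ')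

/-- `ℓ <_T ℓ'`: the node of `ℓ` is a proper ancestor of the node of `ℓ'`. -/
def labelLt (T : SemiLabeledTree L V) (ℓ ℓ' : L) : Prop :=
  T.labelLe ℓ ℓ' ∧ T.lab ℓ ≠ T.lab ℓ'

/-- `ℓ ∥_T ℓ'`: the nodes of `ℓ` and `ℓ'` are incomparable. -/
def labelPar (T : SemiLabeledTree L V) (ℓ ℓ' : L) : Prop :=
  ¬ T.labelLe ℓ ℓ' ∧ ¬ T.labelLe ℓ' ℓ

/-- The cluster `X(u)`: all labels carried by descendants of `u`. -/
def cluster (T : SemiLabeledTree L V) (u : V) : Set L :=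
  {ℓ ∈ T.labels | T.toParentTree.anc u (T.lab ℓ)}

/-- The set of clusters `Cl(T)`. -/
def Cl (T : SemiLabeledTree L V) : Set (Set L) := {X | ∃ u : V, X = T.cluster u}

/-- `D(T)`: ordered pairs of labels in strict ancestor relation. -/
def Dset (T : SemiLabeledTree L V) : Set (L × L) :=
  {p | p.1 ∈ T.labels ∧ p.2 ∈ T.labels ∧ T.labelLt p.1 p.2}

/-- `N(T)`: unordered pairs of incomparable labels. -/
def Nset (T : SemiLabeledTree L V) : Set (Sym2 L) :=
  {z | ∃ ℓ ℓ' : L, z = Sym2.mk ℓ ℓ' ∧ ℓ ∈ T.labels ∧ ℓ' ∈ T.labels ∧ T.labelPar ℓ ℓ'}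

end SemiLabeledTree

/-- The cluster set of the restriction `T|A`:
`{ X ∩ A : X ∈ C, X ∩ A ≠ ∅ }`. -/
def restrictCl {L : Type*} (C : Set (Set L)) (A : Set L) : Set (Set L) :=
  {Y | ∃ X ∈ C, Y = X ∩ A ∧ Y.Nonempty}

/-- `T` ancestrally displays `T'`: `Cl(T') ⊆ Cl(T | L(T'))`. -/
def Displays {L V W : Type*} (T : SemiLabeledTree L V) (T' : SemiLabeledTree L W) : Prop :=
  T'.Cl ⊆ restrictCl T.Cl T'.labels

section Profile

variable {L V : Type*} {k : ℕ}

/-- The label set `L(P)` of a profile. -/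
def LP (P : Fin k → SemiLabeledTree L V) : Set L := ⋃ i, (P i).labels

/-- `P` is ancestrally compatible: some semi-labeled tree on the label set
`L(P)` ancestrally displays every tree of the profile. -/
def AncCompat (P : Fin k → SemiLabeledTree L V) : Prop :=
  ∃ (W : Type) (_ : Fintype W) (T : SemiLabeledTree L W),
    T.labels = LP P ∧ ∀ i, Displays T (P i)

/-- The restricted profile `P|X` is ancestrally compatible: some semi-labeled
tree on label set `L(P) ∩ X` ancestrally displays each restriction
`Tᵢ|(X ∩ L(Tᵢ))` (displaying is expressed via cluster sets, since the
restriction is determined by its cluster set). -/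
def AncCompatOn (P : Fin k → SemiLabeledTree L V) (X : Set L) : Prop :=
  ∃ (W : Type) (_ : Fintype W) (T : SemiLabeledTree L W),
    T.labels = LP P ∩ X ∧
    ∀ i, restrictCl (P i).Cl (X ∩ (P i).labels) ⊆ restrictCl T.Cl (X ∩ (P i).labels)

/-- `Desc_i(U)`: labels of `Tᵢ` descending from some member of `U(i)`. -/
def Desci (P : Fin k → SemiLabeledTree L V) (U : Fin k → Set L) (i : Fin k) : Set L :=
  {ℓ ∈ (P i).labels | ∃ ℓ' ∈ U i, (P i).labelLe ℓ' ℓ}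

/-- `Desc_P(U) = ⋃ i, Desc_i(U)`. -/
def DescP (P : Fin k → SemiLabeledTree L V) (U : Fin k → Set L) : Set L :=
  ⋃ i, Desci P U i

/-- A valid position: each `U(i) ⊆ L(Tᵢ)`; (V1) if `|U(i)| ≥ 2` then the
elements of `U(i)` are siblings in `Tᵢ` (children of a common node `p`);
(V2) `Desc_i(U) = Desc_P(U) ∩ L(Tᵢ)`. -/
def ValidPos (P : Fin k → SemiLabeledTree L V) (U : Fin k → Set L) : Prop :=
  (∀ i, U i ⊆ (P i).labels) ∧
  (∀ i, (∃ a ∈ U i, ∃ b ∈ U i, a ≠ b) →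
    ∃ p : V, ∀ a ∈ U i, (P i).lab a ≠ p ∧ (P i).parent ((P i).lab a) = p) ∧
  (∀ i, Desci P U i = DescP P U ∩ (P i).labels)

/-- `ℓ` is semi-universal in `U`: `ℓ` occurs in `U`, and `U(i) = {ℓ}` for every
`i` with `ℓ ∈ L(Tᵢ)`. -/
def SemiUniversal (P : Fin k → SemiLabeledTree L V) (U : Fin k → Set L) (ℓ : L) : Prop :=
  (∃ i, ℓ ∈ U i) ∧ ∀ i, ℓ ∈ (P i).labels → U i = {ℓ}

/-- `Ch_i(ℓ)`: the labels of the children of (the node of) `ℓ` in `Tᵢ`. -/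
def ChL (P : Fin k → SemiLabeledTree L V) (i : Fin k) (ℓ : L) : Set L :=
  {m ∈ (P i).labels |
    (P i).lab m ≠ (P i).lab ℓ ∧ (P i).parent ((P i).lab m) = (P i).lab ℓ}

/-- The successor of `U` with respect to `S`: if `U(i) = {ℓ}` for some `ℓ ∈ S`
then `U'(i) = Ch_i(ℓ)`, otherwise `U'(i) = U(i)`. -/
def Succ (P : Fin k → SemiLabeledTree L V) (U : Fin k → Set L) (S : Set L) :
    Fin k → Set L := fun i =>
  {m | (∃ ℓ ∈ S, U i = {ℓ} ∧ m ∈ ChL P i ℓ) ∨ ((¬ ∃ ℓ ∈ S, U i = {ℓ}) ∧ m ∈ U i)}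

/-- Adjacency in the display graph `H_P`: labels `ℓ, m` are adjacent when in
some input tree the node of one is the parent of the node of the other. -/
def dgAdj (P : Fin k → SemiLabeledTree L V) (ℓ m : L) : Prop :=
  ∃ i, ℓ ∈ (P i).labels ∧ m ∈ (P i).labels ∧
    (((P i).parent ((P i).lab m) = (P i).lab ℓ ∧ (P i).lab m ≠ (P i).lab ℓ) ∨
     ((P i).parent ((P i).lab ℓ) = (P i).lab m ∧ (P i).lab ℓ ≠ (P i).lab m))

/-- Adjacency in the subgraph of `H_P` induced by `X`. -/
def dgAdjOn (P : Fin k → SemiLabeledTree L V) (X : Set L) (ℓ m : L) : Prop :=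
  ℓ ∈ X ∧ m ∈ X ∧ dgAdj P ℓ m

/-- Reachability (connectivity) in the subgraph of `H_P` induced by `X`. -/
def dgReach (P : Fin k → SemiLabeledTree L V) (X : Set L) : L → L → Prop :=
  Relation.ReflTransGen (dgAdjOn P X)

/-- `W 0, …, W (p-1)` are (the label sets of) the connected components of the
subgraph of the display graph `H_P` induced by `X`: they are nonempty subsets
of `X` partitioning `X`, and two labels lie in a common `W j` iff they are
connected in the induced subgraph. -/
def IsComponents (P : Fin k → SemiLabeledTree L V) (X : Set L) {p : ℕ}
    (W : Fin p → Set L) : Prop :=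
  (∀ j, (W j).Nonempty) ∧ (∀ j, W j ⊆ X) ∧
  (∀ ℓ ∈ X, ∃! j, ℓ ∈ W j) ∧
  (∀ ℓ m : L, (∃ j, ℓ ∈ W j ∧ m ∈ W j) ↔ (ℓ ∈ X ∧ m ∈ X ∧ dgReach P X ℓ m))

end Profile

/-!
Adding labels loses no cluster information: `T'ᵢ` displays `Tᵢ`, and ancestral display is
transitive, so every tree displaying `P'` displays `P`, and so does its restriction to `L(P)`,
a tree on exactly `L(P)`. Conversely, if `T` displays every `Tᵢ`, sending a node of
`Tᵢ` to a node of `T` with the same restricted cluster is an order embedding; putting each fresh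
label of `T'ᵢ` at the image of its node makes `T` display `P'`.
-/

namespace ParentTree

variable {V L : Type*} (t : ParentTree V)

theorem anc_refl (v : V) : t.anc v v := ⟨0, rfl⟩

theorem anc_trans {u v w : V} (huv : t.anc u v) (hvw : t.anc v w) : t.anc u w := by
  obtain ⟨n, rfl⟩ := huv
  obtain ⟨m, rfl⟩ := hvw
  exact ⟨n + m, iterate_add_apply _ _ _ _⟩

theorem anc_parent (v : V) : t.anc (t.parent v) v := ⟨1, rfl⟩

theorem anc_root (v : V) : t.anc t.root v := t.reaches_root v

theorem anc_antisymm {u v : V} (huv : t.anc u v) (hvu : t.anc v u) : u = v := by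
  obtain ⟨n, rfl⟩ := huv
  obtain ⟨m, hm⟩ := hvu
  have hperiodic : IsPeriodicPt t.parent (m + n) v := by
    rw [IsPeriodicPt, IsFixedPt, iterate_add_apply, hm]
  obtain ⟨r, hr⟩ := t.reaches_root v
  rcases Nat.eq_zero_or_pos (m + n) with h0 | hpos
  · rw [show n = 0 by omega, iterate_zero_apply]
  have hv : v = t.root := by
    rw [← (hperiodic.mul_const r).eq, ← Nat.sub_add_cancel (Nat.le_mul_of_pos_left r hpos),
      iterate_add_apply, hr, iterate_fixed t.parent_root]
  subst hv
  exact iterate_fixed t.parent_root n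

theorem anc_total_of_anc {u v x : V} (hu : t.anc u x) (hv : t.anc v x) :
    t.anc u v ∨ t.anc v u := by
  obtain ⟨n, rfl⟩ := hu
  obtain ⟨m, rfl⟩ := hv
  rcases le_total n m with h | h
  · exact Or.inr ⟨m - n, by rw [← iterate_add_apply, Nat.sub_add_cancel h]⟩
  · exact Or.inl ⟨n - m, by rw [← iterate_add_apply, Nat.sub_add_cancel h]⟩

theorem exists_mem_children_anc {u v : V} (huv : t.anc u v) (hne : u ≠ v) :
    ∃ c ∈ t.children u, t.anc c v := by
  obtain ⟨n, rfl⟩ := huv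
  induction n generalizing v with
  | zero => exact absurd rfl hne
  | succ n ih =>
    rw [iterate_succ_apply] at hne ⊢
    by_cases hp : t.parent^[n] (t.parent v) = t.parent v
    · exact ⟨v, ⟨Ne.symm hne, hp.symm⟩, t.anc_refl v⟩
    · obtain ⟨c, hc, hcv⟩ := ih hp
      exact ⟨c, hc, t.anc_trans hcv (t.anc_parent v)⟩

theorem eq_of_anc_of_mem_children {u c c' : V} (hc : c ∈ t.children u)
    (hc' : c' ∈ t.children u) (h : t.anc c c') : c = c' := by
  obtain ⟨_ | n, hn⟩ := h
  · exact hn.symm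
  · rw [iterate_succ_apply, hc'.2] at hn
    exact absurd (t.anc_antisymm ⟨n, hn⟩ (hc.2 ▸ t.anc_parent c)) hc.1

theorem exists_anc_children_eq_empty [Finite V] (v : V) :
    ∃ w, t.anc v w ∧ t.children w = ∅ := by
  let below : V → V → Prop := fun x y => t.anc y x ∧ x ≠ y
  have : IsTrans V below := ⟨fun x y z hxy hyz =>
    ⟨t.anc_trans hyz.1 hxy.1, fun h => hxy.2 (t.anc_antisymm (h ▸ hyz.1) hxy.1)⟩⟩
  have : Std.Irrefl below := ⟨fun x h => h.2 rfl⟩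
  obtain ⟨w, hvw, hmin⟩ := (Finite.wellFounded_of_trans_of_irrefl below).has_min
    {x | t.anc v x} ⟨v, t.anc_refl v⟩
  refine ⟨w, hvw, Set.eq_empty_of_forall_notMem fun c hc => ?_⟩
  have hwc : t.anc w c := hc.2 ▸ t.anc_parent c
  exact hmin c (t.anc_trans hvw hwc) ⟨hwc, hc.1⟩

theorem exists_lab_eq_of_ncard_children_le_one [Finite V] (labels : Set L) (lab : L → V)
    (hbelow : ∀ v, ∃ ℓ ∈ labels, t.anc v (lab ℓ))
    (hsep : ∀ v, ∀ c ∈ t.children v, ∃ ℓ ∈ labels, t.anc v (lab ℓ) ∧ ¬ t.anc c (lab ℓ))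
    {v : V} (hv : (t.children v).ncard ≤ 1) : ∃ ℓ ∈ labels, lab ℓ = v := by
  by_contra! hunlabeled
  obtain ⟨ℓ₀, hℓ₀, hvℓ₀⟩ := hbelow v
  obtain ⟨c₀, hc₀, -⟩ := t.exists_mem_children_anc hvℓ₀ (hunlabeled ℓ₀ hℓ₀).symm
  obtain ⟨ℓ₁, hℓ₁, hvℓ₁, hc₀ℓ₁⟩ := hsep v c₀ hc₀
  obtain ⟨c₁, hc₁, hc₁ℓ₁⟩ := t.exists_mem_children_anc hvℓ₁ (hunlabeled ℓ₁ hℓ₁).symm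
  exact hc₀ℓ₁ (Set.ncard_le_one_iff_subsingleton.1 hv hc₁ hc₀ ▸ hc₁ℓ₁)

section Induce

open scoped Classical

variable {S : Set V}

theorem exists_iterate_mem (hS : t.root ∈ S) (x : V) : ∃ n, t.parent^[n] x ∈ S :=
  let ⟨n, hn⟩ := t.reaches_root x
  ⟨n, hn ▸ hS⟩

noncomputable def nearestAnc (hS : t.root ∈ S) (x : V) : V :=
  t.parent^[Nat.find (t.exists_iterate_mem hS x)] x

theorem nearestAnc_mem (hS : t.root ∈ S) (x : V) : t.nearestAnc hS x ∈ S :=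
  Nat.find_spec (t.exists_iterate_mem hS x)

theorem anc_nearestAnc (hS : t.root ∈ S) (x : V) : t.anc (t.nearestAnc hS x) x := ⟨_, rfl⟩

theorem exists_iterate_nearestAnc_eq (hS : t.root ∈ S) {x : V} {m : ℕ}
    (hm : t.parent^[m] x ∈ S) :
    ∃ j ≤ m, t.parent^[j] (t.nearestAnc hS x) = t.parent^[m] x := by
  have hle := Nat.find_min' (t.exists_iterate_mem hS x) hm
  exact ⟨m - Nat.find (t.exists_iterate_mem hS x), Nat.sub_le _ _, by
    rw [nearestAnc, ← iterate_add_apply, Nat.sub_add_cancel hle]⟩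

theorem anc_nearestAnc_iff (hS : t.root ∈ S) {s x : V} (hs : s ∈ S) :
    t.anc s (t.nearestAnc hS x) ↔ t.anc s x := by
  refine ⟨fun h => t.anc_trans h (t.anc_nearestAnc hS x), fun ⟨m, hm⟩ => ?_⟩
  obtain ⟨j, -, hj⟩ := t.exists_iterate_nearestAnc_eq hS (hm ▸ hs : t.parent^[m] x ∈ S)
  exact ⟨j, hj.trans hm⟩

noncomputable def induceParent (hS : t.root ∈ S) (u : S) : S :=
  ⟨t.nearestAnc hS (t.parent u), t.nearestAnc_mem hS _⟩

theorem anc_iterate_induceParent (hS : t.root ∈ S) (n : ℕ) (w : S) :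
    t.anc ((t.induceParent hS)^[n] w : S) w := by
  induction n with
  | zero => exact t.anc_refl _
  | succ n ih =>
    rw [iterate_succ_apply']
    exact t.anc_trans (t.anc_nearestAnc hS _) (t.anc_trans (t.anc_parent _) ih)

theorem exists_iterate_induceParent_eq (hS : t.root ∈ S) {u w : S} (h : t.anc u w) :
    ∃ n, (t.induceParent hS)^[n] w = u := by
  obtain ⟨m, hm⟩ := h
  induction m using Nat.strong_induction_on generalizing w with
  | _ m ih =>
    rcases m with _ | m
    · exact ⟨0, Subtype.ext hm⟩
    rw [iterate_succ_apply] at hm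
    obtain ⟨j, hj, hju⟩ :=
      t.exists_iterate_nearestAnc_eq hS (hm ▸ u.2 : t.parent^[m] (t.parent w) ∈ S)
    obtain ⟨n, hn⟩ := ih j (Nat.lt_succ_of_le hj) (w := t.induceParent hS w) (hju.trans hm)
    exact ⟨n + 1, by rwa [iterate_succ_apply]⟩

noncomputable def induce (hS : t.root ∈ S) : ParentTree S where
  root := ⟨t.root, hS⟩
  parent := t.induceParent hS
  parent_root := Subtype.ext <| by
    show t.nearestAnc hS (t.parent t.root) = t.root
    rw [t.parent_root]
    exact t.anc_antisymm (t.anc_nearestAnc hS _) (t.anc_root _)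
  reaches_root u := t.exists_iterate_induceParent_eq hS (t.anc_root u)

theorem anc_induce_iff (hS : t.root ∈ S) {u w : S} : (t.induce hS).anc u w ↔ t.anc u w :=
  ⟨fun ⟨n, hn⟩ => hn ▸ t.anc_iterate_induceParent hS n w,
    t.exists_iterate_induceParent_eq hS⟩

theorem anc_induce_nearestAnc_iff (hS : t.root ∈ S) {u : S} {x : V} :
    (t.induce hS).anc u ⟨t.nearestAnc hS x, t.nearestAnc_mem hS x⟩ ↔ t.anc u x :=
  (t.anc_induce_iff hS).trans (t.anc_nearestAnc_iff hS u.2)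

end Induce

end ParentTree

namespace SemiLabeledTree

variable {L V : Type*} (T : SemiLabeledTree L V)

theorem cluster_mono {u v : V} (h : T.anc u v) : T.cluster v ⊆ T.cluster u :=
  fun _ hℓ => ⟨hℓ.1, T.anc_trans h hℓ.2⟩

theorem cluster_nonempty [Finite V] (v : V) : (T.cluster v).Nonempty := by
  obtain ⟨w, hvw, hleaf⟩ := T.exists_anc_children_eq_empty v
  obtain ⟨ℓ, hℓ, rfl⟩ := T.labeled_of_few_children w (by simp [hleaf])
  exact ⟨ℓ, hℓ, hvw⟩

theorem anc_of_cluster_subset [Finite V] {v w : V} (h : T.cluster w ⊆ T.cluster v) :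
    T.anc v w := by
  obtain ⟨ℓ, hℓ⟩ := T.cluster_nonempty w
  rcases T.anc_total_of_anc (h hℓ).2 hℓ.2 with hvw | hwv
  · exact hvw
  by_contra hvw
  obtain ⟨c, hc, hcv⟩ := T.exists_mem_children_anc hwv (by rintro rfl; exact hvw (T.anc_refl _))
  have hwc : T.cluster w ⊆ T.cluster c := h.trans (T.cluster_mono hcv)
  -- any other child would carry a label below `w`, hence below `c`, and be comparable to `c`
  have honly : (T.children w).ncard ≤ 1 := by
    refine Set.ncard_le_one_iff_subsingleton.2 fun c₁ hc₁ c₂ hc₂ => ?_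
    suffices ∀ c' ∈ T.children w, c' = c by rw [this c₁ hc₁, this c₂ hc₂]
    intro c' hc'
    obtain ⟨ℓ', hℓ'⟩ := T.cluster_nonempty c'
    have hcℓ' := (hwc (T.cluster_mono (hc'.2 ▸ T.anc_parent c') hℓ')).2
    rcases T.anc_total_of_anc hℓ'.2 hcℓ' with h' | h'
    · exact T.eq_of_anc_of_mem_children hc' hc h'
    · exact (T.eq_of_anc_of_mem_children hc hc' h').symm
  obtain ⟨ℓw, hℓw, rfl⟩ := T.labeled_of_few_children w honly
  have hcw : T.anc c (T.lab ℓw) := (hwc ⟨hℓw, T.anc_refl _⟩).2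
  exact hc.1 (T.anc_antisymm hcw (hc.2 ▸ T.anc_parent c))

theorem eq_of_cluster_eq [Finite V] {v w : V} (h : T.cluster v = T.cluster w) : v = w :=
  T.anc_antisymm (T.anc_of_cluster_subset h.ge) (T.anc_of_cluster_subset h.le)

def addLabels {M : Set L} (hM : T.labels ⊆ M) (lab' : L → V)
    (hlab' : ∀ ℓ ∈ T.labels, lab' ℓ = T.lab ℓ) : SemiLabeledTree L V where
  toParentTree := T.toParentTree
  labels := M
  lab := lab'
  labeled_of_few_children v hv :=
    let ⟨ℓ, hℓ, hℓv⟩ := T.labeled_of_few_children v hv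
    ⟨ℓ, hM hℓ, (hlab' ℓ hℓ).trans hℓv⟩

section Restrict

variable (A : Set L)

/-- The nodes of `T|A`: for each nonempty restricted cluster `X ∩ A`, the highest node of `T`
carrying it. -/
def restrictNodes : Set V :=
  {u | (T.cluster u ∩ A).Nonempty ∧
    (u = T.root ∨ T.cluster (T.parent u) ∩ A ≠ T.cluster u ∩ A)}

variable {A}

theorem root_mem_restrictNodes (hA : A ⊆ T.labels) (hne : A.Nonempty) :
    T.root ∈ T.restrictNodes A := by
  refine ⟨?_, Or.inl rfl⟩
  obtain ⟨ℓ, hℓ⟩ := hne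
  exact ⟨ℓ, ⟨hA hℓ, T.anc_root _⟩, hℓ⟩

theorem exists_mem_restrictNodes {x : V} (hx : (T.cluster x ∩ A).Nonempty) :
    ∃ u ∈ T.restrictNodes A, T.cluster u ∩ A = T.cluster x ∩ A := by
  classical
  have hex : ∃ n, T.parent^[n] x = T.root ∨
      T.cluster (T.parent^[n + 1] x) ∩ A ≠ T.cluster x ∩ A :=
    let ⟨n, hn⟩ := T.reaches_root x
    ⟨n, Or.inl hn⟩
  have hu : T.cluster (T.parent^[Nat.find hex] x) ∩ A = T.cluster x ∩ A := by
    rcases hN : Nat.find hex with _ | n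
    · rfl
    exact not_ne_iff.1 (not_or.1 (Nat.find_min hex (m := n) (by omega))).2
  refine ⟨_, ⟨hu.symm ▸ hx, ?_⟩, hu⟩
  rw [hu, ← iterate_succ_apply' T.parent]
  exact Nat.find_spec hex

theorem cluster_inter_ssubset_of_mem_children (hA : A ⊆ T.labels) (hne : A.Nonempty)
    {v c : T.restrictNodes A}
    (hc : c ∈ (T.induce (T.root_mem_restrictNodes hA hne)).children v) :
    T.cluster c ∩ A ⊂ T.cluster v ∩ A := by
  obtain ⟨hcv, hparent⟩ := hc
  have hvc : T.anc v (T.parent c) := by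
    rw [← hparent]
    exact T.anc_nearestAnc (T.root_mem_restrictNodes hA hne) _
  have hcroot : (c : V) ≠ T.root := by
    intro hroot
    have : c = (T.induce (T.root_mem_restrictNodes hA hne)).root := Subtype.ext hroot
    rw [this, ParentTree.parent_root] at hparent
    exact hcv (this.trans hparent)
  have hstrict : T.cluster c ∩ A ⊂ T.cluster (T.parent c) ∩ A :=
    (Set.inter_subset_inter_left A (T.cluster_mono (T.anc_parent c))).ssubset_of_ne
      (c.2.2.resolve_left hcroot).symm
  exact hstrict.trans_subset (Set.inter_subset_inter_left A (T.cluster_mono hvc))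

noncomputable def restrict [Finite V] (hA : A ⊆ T.labels) (hne : A.Nonempty) :
    SemiLabeledTree L (T.restrictNodes A) where
  toParentTree := T.induce (T.root_mem_restrictNodes hA hne)
  labels := A
  lab ℓ := ⟨_, T.nearestAnc_mem (T.root_mem_restrictNodes hA hne) (T.lab ℓ)⟩
  labeled_of_few_children _ :=
    ParentTree.exists_lab_eq_of_ncard_children_le_one _ _ _
      (fun v => by
        obtain ⟨ℓ, ⟨-, hvℓ⟩, hℓA⟩ := v.2.1
        exact ⟨ℓ, hℓA, (T.anc_induce_nearestAnc_iff _).2 hvℓ⟩)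
      (fun _ _ hc => by
        obtain ⟨ℓ, ⟨⟨-, hvℓ⟩, hℓA⟩, hcℓ⟩ :=
          Set.exists_of_ssubset (T.cluster_inter_ssubset_of_mem_children hA hne hc)
        simp only [T.anc_induce_nearestAnc_iff]
        exact ⟨ℓ, hℓA, hvℓ, fun h => hcℓ ⟨⟨hA hℓA, h⟩, hℓA⟩⟩)

theorem cluster_restrict [Finite V] (hA : A ⊆ T.labels) (hne : A.Nonempty)
    (u : T.restrictNodes A) : (T.restrict hA hne).cluster u = T.cluster u ∩ A := by
  ext ℓ
  change ℓ ∈ A ∧ (T.induce _).anc u ⟨_, _⟩ ↔ _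
  rw [T.anc_induce_nearestAnc_iff]
  exact ⟨fun ⟨hℓA, h⟩ => ⟨⟨hA hℓA, h⟩, hℓA⟩, fun ⟨⟨_, h⟩, hℓA⟩ => ⟨hℓA, h⟩⟩

theorem restrictCl_subset_Cl_restrict [Finite V] (hA : A ⊆ T.labels) (hne : A.Nonempty) :
    restrictCl T.Cl A ⊆ (T.restrict hA hne).Cl := by
  rintro _ ⟨_, ⟨x, rfl⟩, rfl, hx⟩
  obtain ⟨u, hu, hux⟩ := T.exists_mem_restrictNodes hx
  exact ⟨⟨u, hu⟩, by rw [cluster_restrict, hux]⟩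

end Restrict

end SemiLabeledTree

theorem restrictCl_mono {L : Type*} {C D : Set (Set L)} (h : C ⊆ D) (A : Set L) :
    restrictCl C A ⊆ restrictCl D A := by
  rintro _ ⟨X, hX, rfl, hne⟩
  exact ⟨X, h hX, rfl, hne⟩

theorem restrictCl_restrictCl {L : Type*} (C : Set (Set L)) {A B : Set L} (hBA : B ⊆ A) :
    restrictCl (restrictCl C A) B = restrictCl C B := by
  have hAB (X : Set L) : X ∩ A ∩ B = X ∩ B := by
    rw [Set.inter_assoc, Set.inter_eq_right.2 hBA]
  ext Y
  constructor
  · rintro ⟨_, ⟨X, hX, rfl, -⟩, rfl, hne⟩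
    exact ⟨X, hX, hAB X, hAB X ▸ hne⟩
  · rintro ⟨X, hX, rfl, hne⟩
    refine ⟨X ∩ A, ⟨X, hX, rfl, ?_⟩, (hAB X).symm, hne⟩
    exact ((hAB X).symm ▸ hne).mono Set.inter_subset_left

section Displays

variable {L U V W : Type*} {T : SemiLabeledTree L W} {S : SemiLabeledTree L V}

theorem displays_of_forall_exists_cluster_eq [Finite V]
    (h : ∀ v, ∃ u, S.cluster v = T.cluster u ∩ S.labels) : Displays T S := by
  rintro _ ⟨v, rfl⟩
  obtain ⟨u, hu⟩ := h v
  exact ⟨_, ⟨u, rfl⟩, hu, S.cluster_nonempty v⟩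

theorem Displays.trans {R : SemiLabeledTree L U} (hTS : Displays T S) (hSR : Displays S R)
    (hRS : R.labels ⊆ S.labels) : Displays T R :=
  calc R.Cl ⊆ restrictCl S.Cl R.labels := hSR
    _ ⊆ restrictCl (restrictCl T.Cl S.labels) R.labels := restrictCl_mono hTS _
    _ = restrictCl T.Cl R.labels := restrictCl_restrictCl _ hRS

theorem displays_of_extension [Finite V] {S' : SemiLabeledTree L V}
    (hsame : S'.toParentTree = S.toParentTree) (hsub : S.labels ⊆ S'.labels)
    (hagree : ∀ ℓ ∈ S.labels, S'.lab ℓ = S.lab ℓ) : Displays S' S := by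
  refine displays_of_forall_exists_cluster_eq fun v => ⟨v, Set.ext fun ℓ => ?_⟩
  change ℓ ∈ S.labels ∧ S.anc v (S.lab ℓ) ↔
    (ℓ ∈ S'.labels ∧ S'.anc v (S'.lab ℓ)) ∧ ℓ ∈ S.labels
  rw [hsame]
  exact ⟨fun ⟨hℓ, h⟩ => ⟨⟨hsub hℓ, hagree ℓ hℓ ▸ h⟩, hℓ⟩,
    fun ⟨⟨_, h⟩, hℓ⟩ => ⟨hℓ, hagree ℓ hℓ ▸ h⟩⟩

theorem Displays.exists_anc_embedding [Finite V] (h : Displays T S) :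
    ∃ f : V → W, (∀ v, T.cluster (f v) ∩ S.labels = S.cluster v) ∧
      ∀ v w, T.anc (f v) (f w) ↔ S.anc v w := by
  have hex (v : V) : ∃ u, T.cluster u ∩ S.labels = S.cluster v := by
    obtain ⟨_, ⟨u, rfl⟩, hu, -⟩ := h ⟨v, rfl⟩
    exact ⟨u, hu.symm⟩
  choose f hf using hex
  have hsub {v w : V} (h : T.anc (f v) (f w)) : S.cluster w ⊆ S.cluster v := by
    rw [← hf v, ← hf w]
    exact Set.inter_subset_inter_left _ (T.cluster_mono h)
  refine ⟨f, hf, fun v w => ⟨fun hfvw => S.anc_of_cluster_subset (hsub hfvw), fun hvw => ?_⟩⟩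
  obtain ⟨ℓ, hℓ⟩ := S.cluster_nonempty w
  have hvℓ := S.cluster_mono hvw hℓ
  rw [← hf w] at hℓ
  rw [← hf v] at hvℓ
  rcases T.anc_total_of_anc hvℓ.1.2 hℓ.1.2 with hfvw | hfwv
  · exact hfvw
  · rw [S.eq_of_cluster_eq ((hsub hfwv).antisymm (S.cluster_mono hvw))]
    exact T.anc_refl _

end Displays

section Profile

variable {L V : Type*} {k : ℕ}

theorem ancCompat_of_displays [Finite V] [NeZero k] {W : Type} [Finite W]
    (T : SemiLabeledTree L W) {P : Fin k → SemiLabeledTree L V} (hlab : LP P ⊆ T.labels)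
    (hT : ∀ i, Displays T (P i)) : AncCompat P := by
  have hne : (LP P).Nonempty :=
    ((P 0).cluster_nonempty (P 0).root).mono fun ℓ hℓ => Set.mem_iUnion.2 ⟨0, hℓ.1⟩
  refine ⟨_, Fintype.ofFinite _, T.restrict hlab hne, rfl, fun i => ?_⟩
  calc (P i).Cl ⊆ restrictCl T.Cl (P i).labels := hT i
    _ = restrictCl (restrictCl T.Cl (LP P)) (P i).labels :=
      (restrictCl_restrictCl _ (Set.subset_iUnion (fun j => (P j).labels) i)).symm
    _ ⊆ _ := restrictCl_mono (T.restrictCl_subset_Cl_restrict hlab hne) _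

theorem AncCompat.of_freshLabels [Finite V] {P P' : Fin k → SemiLabeledTree L V}
    (hP : AncCompat P)
    (hsame : ∀ i, (P' i).toParentTree = (P i).toParentTree)
    (hsub : ∀ i, (P i).labels ⊆ (P' i).labels)
    (hagree : ∀ i, ∀ ℓ ∈ (P i).labels, (P' i).lab ℓ = (P i).lab ℓ)
    (hfresh : ∀ i, ∀ ℓ ∈ (P' i).labels \ (P i).labels, ℓ ∉ LP P)
    (hdistinct : ∀ i j : Fin k, ∀ ℓ : L, ℓ ∈ (P' i).labels \ (P i).labels →
      ℓ ∈ (P' j).labels \ (P j).labels → i = j) :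
    AncCompat P' := by
  classical
  obtain ⟨W, _, T, hTlab, hT⟩ := hP
  choose f hf hanc using fun i => (hT i).exists_anc_embedding
  let lab' : L → W := fun ℓ =>
    if h : ∃ j, ℓ ∈ (P' j).labels \ (P j).labels then f h.choose ((P' h.choose).lab ℓ)
    else T.lab ℓ
  have hold : ∀ ℓ ∈ LP P, lab' ℓ = T.lab ℓ := fun ℓ hℓ =>
    dif_neg fun ⟨j, hj⟩ => hfresh j ℓ hj hℓ
  have hnew : ∀ i, ∀ ℓ ∈ (P' i).labels \ (P i).labels, lab' ℓ = f i ((P' i).lab ℓ) := by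
    intro i ℓ hℓ
    have h : ∃ j, ℓ ∈ (P' j).labels \ (P j).labels := ⟨i, hℓ⟩
    rw [show lab' ℓ = _ from dif_pos h, hdistinct _ i ℓ h.choose_spec hℓ]
  have key : ∀ i v, ∀ ℓ ∈ (P' i).labels,
      (P i).anc v ((P' i).lab ℓ) ↔ T.anc (f i v) (lab' ℓ) := by
    intro i v ℓ hℓ
    by_cases hℓP : ℓ ∈ (P i).labels
    · have hℓLP : ℓ ∈ LP P := Set.mem_iUnion.2 ⟨i, hℓP⟩
      have hmem := Set.ext_iff.1 (hf i v) ℓ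
      simp only [Set.mem_inter_iff, SemiLabeledTree.cluster, Set.mem_ofPred_eq, hTlab, hℓLP,
        hℓP, true_and, and_true] at hmem
      rw [hagree i ℓ hℓP, hold ℓ hℓLP, hmem]
    · rw [hnew i ℓ ⟨hℓ, hℓP⟩, hanc]
  have hlabels : T.labels ⊆ LP P' := hTlab ▸ Set.iUnion_mono hsub
  refine ⟨W, ‹_›, T.addLabels hlabels lab' (fun ℓ hℓ => hold ℓ (hTlab ▸ hℓ)), rfl,
    fun i => displays_of_forall_exists_cluster_eq fun v => ⟨f i v, ?_⟩⟩
  ext ℓ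
  change ℓ ∈ (P' i).labels ∧ (P' i).anc v ((P' i).lab ℓ) ↔
    (ℓ ∈ LP P' ∧ T.anc (f i v) (lab' ℓ)) ∧ ℓ ∈ (P' i).labels
  rw [hsame i]
  exact ⟨fun ⟨hℓ, h⟩ => ⟨⟨Set.mem_iUnion.2 ⟨i, hℓ⟩, (key i v ℓ hℓ).1 h⟩, hℓ⟩,
    fun ⟨⟨_, h⟩, hℓ⟩ => ⟨hℓ, (key i v ℓ hℓ).2 h⟩⟩

end Profile

theorem stmt11_general {L V : Type*} [Fintype V] {k : ℕ}
    (P P' : Fin k → SemiLabeledTree L V)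
    (hsame : ∀ i, (P' i).toParentTree = (P i).toParentTree)
    (hsub : ∀ i, (P i).labels ⊆ (P' i).labels)
    (hagree : ∀ i, ∀ ℓ ∈ (P i).labels, (P' i).lab ℓ = (P i).lab ℓ)
    (hfresh : ∀ i, ∀ ℓ ∈ (P' i).labels \ (P i).labels, ℓ ∉ LP P)
    (hdistinct : ∀ i j : Fin k, ∀ ℓ : L, ℓ ∈ (P' i).labels \ (P i).labels →
      ℓ ∈ (P' j).labels \ (P j).labels → i = j) :
    (AncCompat P ↔ AncCompat P') ∧
    (∀ (W : Type) (_ : Fintype W) (T : SemiLabeledTree L W),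
      T.labels = LP P' → (∀ i, Displays T (P' i)) → ∀ i, Displays T (P i)) := by
  have hdisp : ∀ (W : Type) (_ : Fintype W) (T : SemiLabeledTree L W),
      T.labels = LP P' → (∀ i, Displays T (P' i)) → ∀ i, Displays T (P i) :=
    fun _ _ _ _ hT i =>
      (hT i).trans (displays_of_extension (hsame i) (hsub i) (hagree i)) (hsub i)
  refine ⟨⟨fun hP => hP.of_freshLabels hsame hsub hagree hfresh hdistinct, ?_⟩, hdisp⟩
  rintro ⟨W, hW, T, hTlab, hT⟩
  obtain ⟨ℓ, hℓ, -⟩ := T.cluster_nonempty T.root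
  obtain ⟨i, -⟩ := Set.mem_iUnion.1 (hTlab ▸ hℓ)
  have : NeZero k := ⟨i.pos.ne'⟩
  exact ancCompat_of_displays T (hTlab ▸ Set.iUnion_mono hsub) (hdisp W hW T hTlab hT)

/-- Daniel–Semple. Let `P'` be obtained from `P` by
assigning distinct fresh labels (not in `L(P)`) to all unlabeled nodes of the
trees of `P`, making them fully labeled. Then `P` is ancestrally compatible iff
`P'` is; moreover any semi-labeled tree that ancestrally displays `P'` also
ancestrally displays `P`. -/
theorem stmt11 {L V : Type*} [Fintype V] {k : ℕ}
    (P P' : Fin k → SemiLabeledTree L V)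
    (hsame : ∀ i, (P' i).toParentTree = (P i).toParentTree)
    (hsub : ∀ i, (P i).labels ⊆ (P' i).labels)
    (hagree : ∀ i, ∀ ℓ ∈ (P i).labels, (P' i).lab ℓ = (P i).lab ℓ)
    (hfull : ∀ i, (P' i).FullyLabeled)
    (hnewUnlabeled : ∀ i, ∀ ℓ ∈ (P' i).labels \ (P i).labels,
      ∀ ℓ' ∈ (P i).labels, (P i).lab ℓ' ≠ (P' i).lab ℓ)
    (hnewInj : ∀ i, ∀ ℓ ∈ (P' i).labels \ (P i).labels,
      ∀ m ∈ (P' i).labels \ (P i).labels, (P' i).lab ℓ = (P' i).lab m → ℓ = m)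
    (hfresh : ∀ i, ∀ ℓ ∈ (P' i).labels \ (P i).labels, ℓ ∉ LP P)
    (hdistinct : ∀ i j : Fin k, ∀ ℓ : L, ℓ ∈ (P' i).labels \ (P i).labels →
      ℓ ∈ (P' j).labels \ (P j).labels → i = j) :
    (AncCompat P ↔ AncCompat P') ∧
    (∀ (W : Type) (_ : Fintype W) (T : SemiLabeledTree L W),
      T.labels = LP P' → (∀ i, Displays T (P' i)) → ∀ i, Displays T (P i)) :=
  stmt11_general P P' hsame hsub hagree hfresh hdistinct
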